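/- arXiv:1004.5511 — 7 statements merged into one kernel-verified Lean document; each statement's English description precedes it below -/
import Mathlib

section
/- For generic rational u, setting a = (u²−1)/(2u−1) and x₀ = (u²−1)/(u²−u+1), the point (x₀, −x₀) is a periodic point of the Lyness map F_a(x,y) = (y, (a+y)/x) of period 7: F_a^7(x₀, −x₀) = (x₀, −x₀), provided all iterates are defined. -/
/-- The Lyness map `F_a(x,y) = (y, (a+y)/x)`. -/
def lyness (a : ℚ) (p : ℚ × ℚ) : ℚ × ℚ := (p.2, (a + p.2) / p.1)

/-!
The orbit of `(x₀, -x₀)` is written down explicitly: the Lyness map sends `(xₙ, xₙ₊₁)` to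
`(xₙ₊₁, xₙ₊₂)` exactly when `xₙ xₙ₊₂ = a + xₙ₊₁`, and for the seven rational functions of `u`
in `lynessSevenCycle` this relation holds cyclically, as an identity of rational functions
whose denominators are nonzero once `u² ≠ 1`, i.e. `x₀ ≠ 0`.
-/

theorem lyness_eq_of_mul_eq {a x y z : ℚ} (hx : x ≠ 0) (h : x * z = a + y) :
    lyness a (x, y) = (y, z) :=
  Prod.ext rfl <| (div_eq_iff hx).2 <| by rw [mul_comm, h]

theorem iterate_lyness_of_recurrence {a : ℚ} {s : ℕ → ℚ} {k : ℕ}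
    (hrec : ∀ n < k, s n * s (n + 2) = a + s (n + 1))
    (hne : ∀ n < k, ((lyness a)^[n] (s 0, s 1)).1 ≠ 0) :
    (lyness a)^[k] (s 0, s 1) = (s k, s (k + 1)) := by
  induction k with
  | zero => rfl
  | succ k ih =>
    have hk : (lyness a)^[k] (s 0, s 1) = (s k, s (k + 1)) :=
      ih (fun n hn => hrec n (by omega)) (fun n hn => hne n (by omega))
    have hsk : s k ≠ 0 := by simpa [hk] using hne k (by omega)
    rw [Function.iterate_succ_apply', hk]
    exact lyness_eq_of_mul_eq hsk (hrec k (by omega))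

open Fin.NatCast

def lynessSevenCycle (u : ℚ) : Fin 7 → ℚ :=
  ![(u^2 - 1)/(u^2 - u + 1), -((u^2 - 1)/(u^2 - u + 1)),
    (u - 1) * (u - 2) / (2*u - 1), -(u^2 - u + 1) / (u + 1), u * (2 - u) / (u^2 - 1),
    -(u^2 - u + 1) / ((2*u - 1) * (u - 1)), -(u * (u + 1)) / (2*u - 1)]

theorem lynessSevenCycle_mul_add_two {u : ℚ} (hu : u^2 - 1 ≠ 0) (h1 : 2*u - 1 ≠ 0)
    (h2 : u^2 - u + 1 ≠ 0) (i : Fin 7) :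
    lynessSevenCycle u i * lynessSevenCycle u (i + 2)
      = (u^2 - 1)/(2*u - 1) + lynessSevenCycle u (i + 1) := by
  have hm : u - 1 ≠ 0 := fun h => hu (by linear_combination (u + 1) * h)
  have hp : u + 1 ≠ 0 := fun h => hu (by linear_combination (u - 1) * h)
  -- the shapes `field_simp` normalizes `2*u - 1` and `u^2 - u + 1` to
  have h1' : u * 2 - 1 ≠ 0 := by rwa [mul_comm]
  have h2' : u * (u - 1) + 1 ≠ 0 := by rwa [← show u^2 - u + 1 = u * (u - 1) + 1 by ring]
  fin_cases i <;>
    simp only [lynessSevenCycle, Fin.zero_eta, Fin.mk_one, Fin.reduceFinMk, Fin.isValue,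
      Fin.reduceAdd, zero_add, Matrix.cons_val, Matrix.cons_val_zero, Matrix.cons_val_one] <;>
    field_simp <;> ring

/-- For generic `u`, with `a = (u²-1)/(2u-1)` and `x₀ = (u²-1)/(u²-u+1)`,
the point `(x₀, -x₀)` is 7-periodic under `F_a`, provided all iterates are defined. -/
theorem lyness_period_seven (u : ℚ) (h1 : 2*u - 1 ≠ 0) (h2 : u^2 - u + 1 ≠ 0)
    (hdef : ∀ k, k < 7 →
      ((lyness ((u^2 - 1)/(2*u - 1)))^[k]
        ((u^2 - 1)/(u^2 - u + 1), -((u^2 - 1)/(u^2 - u + 1)))).1 ≠ 0) :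
    (lyness ((u^2 - 1)/(2*u - 1)))^[7]
        ((u^2 - 1)/(u^2 - u + 1), -((u^2 - 1)/(u^2 - u + 1)))
      = ((u^2 - 1)/(u^2 - u + 1), -((u^2 - 1)/(u^2 - u + 1))) := by
  have hu : u^2 - 1 ≠ 0 := (div_ne_zero_iff.mp (hdef 0 (by norm_num))).1
  have hrec (n : ℕ) : lynessSevenCycle u (n : Fin 7) * lynessSevenCycle u ((n + 2 : ℕ) : Fin 7)
      = (u^2 - 1)/(2*u - 1) + lynessSevenCycle u ((n + 1 : ℕ) : Fin 7) := by
    push_cast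
    exact lynessSevenCycle_mul_add_two hu h1 h2 (n : Fin 7)
  -- indices are read in `Fin 7`, so the sequence returns to `(x₀, -x₀)` at `n = 7` by `rfl`
  exact iterate_lyness_of_recurrence (s := fun n => lynessSevenCycle u (n : Fin 7))
    (fun n _ => hrec n) hdef
end

section
/- For generic rational u, setting a = (u²−1)/(u²+2u−1) and x₀ = (u²−1)/(u²+1), the point (x₀, −x₀) is a periodic point of the Lyness map F_a(x,y) = (y, (a+y)/x) of period 8: F_a^8(x₀, −x₀) = (x₀, −x₀), provided all iterates are defined. -/
theorem lyness_iterate_apply {a : ℚ} {x : ℕ → ℚ} (hx : ∀ n, x (n + 2) = (a + x (n + 1)) / x n)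
    (n : ℕ) : (lyness a)^[n] (x 0, x 1) = (x n, x (n + 1)) := by
  induction n with
  | zero => rfl
  | succ n ih => rw [Function.iterate_succ_apply', ih, lyness, ← hx]

open Fin.NatCast in
theorem lyness_isPeriodicPt_of_cycle {N : ℕ} [NeZero N] {a : ℚ} {x : Fin N → ℚ}
    (hx : ∀ i, x (i + 2) = (a + x (i + 1)) / x i) :
    Function.IsPeriodicPt (lyness a) N (x 0, x 1) := by
  have h := lyness_iterate_apply (x := fun n : ℕ ↦ x n) (fun n ↦ by push_cast; exact hx n) N
  simpa [Function.IsPeriodicPt, Function.IsFixedPt] using h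

def lynessCycle (u : ℚ) : Fin 8 → ℚ :=
  ![(u^2 - 1) / (u^2 + 1), -((u^2 - 1) / (u^2 + 1)), 2 * (1 - u) / (u^2 + 2*u - 1),
    (1 - u) * (u^2 + 1) / ((1 + u) * (u^2 + 2*u - 1)), -u / (1 + u), -1 / (1 - u),
    (1 + u) * (u^2 + 1) / ((1 - u) * (u^2 + 2*u - 1)), -(2 * u * (1 + u)) / (u^2 + 2*u - 1)]

theorem lynessCycle_add_two {u : ℚ} (hu : u ≠ 0) (hu1 : u^2 - 1 ≠ 0) (h1 : u^2 + 2*u - 1 ≠ 0)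
    (i : Fin 8) :
    lynessCycle u (i + 2) =
      ((u^2 - 1) / (u^2 + 2*u - 1) + lynessCycle u (i + 1)) / lynessCycle u i := by
  have hp : 1 + u ≠ 0 := fun h ↦ hu1 (by linear_combination (u - 1) * h)
  have hm : 1 - u ≠ 0 := fun h ↦ hu1 (by linear_combination -(u + 1) * h)
  -- `field_simp` normalises `u^2 + 2*u - 1` to this form
  have hd : u * (u + 2) - 1 ≠ 0 := by convert h1 using 1; ring
  fin_cases i <;>
    simp only [lynessCycle, Fin.zero_eta, Fin.mk_one, Fin.reduceFinMk, Fin.isValue,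
      Fin.reduceAdd, zero_add, Matrix.cons_val, Matrix.cons_val_one, Matrix.cons_val_zero] <;>
    field_simp <;> ring

/-- For generic `u`, with `a = (u²-1)/(u²+2u-1)` and `x₀ = (u²-1)/(u²+1)`,
the point `(x₀, -x₀)` is 8-periodic under `F_a`, provided all iterates are defined. -/
theorem lyness_period_eight (u : ℚ) (h1 : u^2 + 2*u - 1 ≠ 0)
    (hdef : ∀ k, k < 8 →
      ((lyness ((u^2 - 1)/(u^2 + 2*u - 1)))^[k]
        ((u^2 - 1)/(u^2 + 1), -((u^2 - 1)/(u^2 + 1)))).1 ≠ 0) :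
    (lyness ((u^2 - 1)/(u^2 + 2*u - 1)))^[8]
        ((u^2 - 1)/(u^2 + 1), -((u^2 - 1)/(u^2 + 1)))
      = ((u^2 - 1)/(u^2 + 1), -((u^2 - 1)/(u^2 + 1))) := by
  have hu1 : u^2 - 1 ≠ 0 := (div_ne_zero_iff.mp (hdef 0 (by norm_num))).1
  -- at `u = 0` we get `a = 1`, and the orbit of `(-1, 1)` reaches `x = 0` after four steps
  have hu : u ≠ 0 := by
    rintro rfl
    have h := hdef 4 (by norm_num)
    norm_num [lyness] at h
  exact lyness_isPeriodicPt_of_cycle (lynessCycle_add_two hu hu1 h1)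
end

section
/- If a point (x,y) with x,y rational satisfies a(x+1)(y+1)(x+y+a) − (a−1)(a²−a+1)xy = 0 for a = 7, and all iterates of the Lyness map F_7 at (x,y) are defined, then F_7^9(x,y) = (x,y). -/
set_option maxHeartbeats 4000000 in
lemma lyness_key (x0 x1 x2 x3 x4 x5 x6 x7 x8 x9 x10 : ℚ) (n0 : x0 ≠ 0) (n1 : x1 ≠ 0) (n2 : x2 ≠ 0) (n3 : x3 ≠ 0) (n4 : x4 ≠ 0) (n5 : x5 ≠ 0) (n6 : x6 ≠ 0) (n7 : x7 ≠ 0) (n8 : x8 ≠ 0)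
    (s0 : x2 * x0 = 7 + x1) (s1 : x3 * x1 = 7 + x2) (s2 : x4 * x2 = 7 + x3) (s3 : x5 * x3 = 7 + x4) (s4 : x6 * x4 = 7 + x5) (s5 : x7 * x5 = 7 + x6) (s6 : x8 * x6 = 7 + x7) (s7 : x9 * x7 = 7 + x8) (s8 : x10 * x8 = 7 + x9)
    (hc : 7 * (x0 + 1) * (x1 + 1) * (x0 + x1 + 7) - (7 - 1) * (7^2 - 7 + 1) * x0 * x1 = 0) :
    x9 = x0 ∧ x10 = x1 := by
  have DZ0 : (1:ℚ) ≠ 0 := one_ne_zero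
  have DZ1 : (1:ℚ) ≠ 0 := one_ne_zero
  have NZ0 : x0 ≠ 0 := n0
  have NZ1 : x1 ≠ 0 := n1
  have DZ2 : (1*x0) ≠ 0 := by
    intro h0
    exact mul_ne_zero DZ1 NZ0 (by linear_combination (1) * h0)
  have GZ2 : ((1) : ℚ) ≠ 0 := by
    intro h0
    exact mul_ne_zero DZ1 NZ0 (by linear_combination (1*x0) * h0)
  have Z2 : (x2 * (1*x0) - (7 + 1*x1)) * ((1) : ℚ) = 0 := by
    linear_combination ((1) * (1)) * s0
  have H2 : x2 * (1*x0) = (7 + 1*x1) := by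
    exact sub_eq_zero.mp ((mul_eq_zero.mp Z2).resolve_right GZ2)
  have NZ2 : (7 + 1*x1) ≠ 0 := by rw [← H2]; exact mul_ne_zero n2 DZ2
  have DZ3 : (1*x0*x1) ≠ 0 := by
    intro h0
    exact mul_ne_zero DZ2 NZ1 (by linear_combination (1) * h0)
  have GZ3 : ((1) : ℚ) ≠ 0 := by
    intro h0
    exact mul_ne_zero DZ2 NZ1 (by linear_combination (1*x0*x1) * h0)
  have Z3 : (x3 * (1*x0*x1) - (7 + 1*x1 + 7*x0)) * ((1) : ℚ) = 0 := by
    linear_combination ((1) * (1*x0)) * s1 + ((1)) * H2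
  have H3 : x3 * (1*x0*x1) = (7 + 1*x1 + 7*x0) := by
    exact sub_eq_zero.mp ((mul_eq_zero.mp Z3).resolve_right GZ3)
  have NZ3 : (7 + 1*x1 + 7*x0) ≠ 0 := by rw [← H3]; exact mul_ne_zero n3 DZ3
  have DZ4 : (7*x1 + 1*x1^2) ≠ 0 := by
    intro h0
    exact mul_ne_zero DZ3 NZ2 (by linear_combination (1*x0) * h0)
  have GZ4 : ((1*x0) : ℚ) ≠ 0 := by
    intro h0
    exact mul_ne_zero DZ3 NZ2 (by linear_combination (7*x1 + 1*x1^2) * h0)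
  have Z4 : (x4 * (7*x1 + 1*x1^2) - (7 + 1*x1 + 7*x0 + 7*x0*x1)) * ((1*x0) : ℚ) = 0 := by
    linear_combination ((1*x0) * (1*x0*x1)) * s2 - (x4 * (1*x0*x1)) * H2 + ((1*x0)) * H3
  have H4 : x4 * (7*x1 + 1*x1^2) = (7 + 1*x1 + 7*x0 + 7*x0*x1) := by
    exact sub_eq_zero.mp ((mul_eq_zero.mp Z4).resolve_right GZ4)
  have NZ4 : (7 + 1*x1 + 7*x0 + 7*x0*x1) ≠ 0 := by rw [← H4]; exact mul_ne_zero n4 DZ4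
  have DZ5 : (49 + 14*x1 + 1*x1^2 + 49*x0 + 7*x0*x1) ≠ 0 := by
    intro h0
    exact mul_ne_zero DZ4 NZ3 (by linear_combination (1*x1) * h0)
  have GZ5 : ((1*x1) : ℚ) ≠ 0 := by
    intro h0
    exact mul_ne_zero DZ4 NZ3 (by linear_combination (49 + 14*x1 + 1*x1^2 + 49*x0 + 7*x0*x1) * h0)
  have Z5 : (x5 * (49 + 14*x1 + 1*x1^2 + 49*x0 + 7*x0*x1) - (7*x0 + 50*x0*x1 + 7*x0*x1^2 + 7*x0^2 + 7*x0^2*x1)) * ((1*x1) : ℚ) = 0 := by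
    linear_combination ((1*x0*x1) * (7*x1 + 1*x1^2)) * s3 - (x5 * (7*x1 + 1*x1^2)) * H3 + ((1*x0*x1)) * H4
  have H5 : x5 * (49 + 14*x1 + 1*x1^2 + 49*x0 + 7*x0*x1) = (7*x0 + 50*x0*x1 + 7*x0*x1^2 + 7*x0^2 + 7*x0^2*x1) := by
    exact sub_eq_zero.mp ((mul_eq_zero.mp Z5).resolve_right GZ5)
  have NZ5 : (7*x0 + 50*x0*x1 + 7*x0*x1^2 + 7*x0^2 + 7*x0^2*x1) ≠ 0 := by rw [← H5]; exact mul_ne_zero n5 DZ5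
  have DZ6 : (49 + 14*x1 + 1*x1^2 + 98*x0 + 63*x0*x1 + 7*x0*x1^2 + 49*x0^2 + 49*x0^2*x1) ≠ 0 := by
    intro h0
    exact mul_ne_zero DZ5 NZ4 (by linear_combination (7 + 1*x1) * h0)
  have GZ6 : ((7 + 1*x1) : ℚ) ≠ 0 := by
    intro h0
    exact mul_ne_zero DZ5 NZ4 (by linear_combination (49 + 14*x1 + 1*x1^2 + 98*x0 + 63*x0*x1 + 7*x0*x1^2 + 49*x0^2 + 49*x0^2*x1) * h0)
  have Z6 : (x6 * (49 + 14*x1 + 1*x1^2 + 98*x0 + 63*x0*x1 + 7*x0*x1^2 + 49*x0^2 + 49*x0^2*x1) - (343*x1 + 98*x1^2 + 7*x1^3 + 350*x0*x1 + 99*x0*x1^2 + 7*x0*x1^3 + 7*x0^2*x1 + 7*x0^2*x1^2)) * ((7 + 1*x1) : ℚ) = 0 := by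
    linear_combination ((7*x1 + 1*x1^2) * (49 + 14*x1 + 1*x1^2 + 49*x0 + 7*x0*x1)) * s4 - (x6 * (49 + 14*x1 + 1*x1^2 + 49*x0 + 7*x0*x1)) * H4 + ((7*x1 + 1*x1^2)) * H5
  have H6 : x6 * (49 + 14*x1 + 1*x1^2 + 98*x0 + 63*x0*x1 + 7*x0*x1^2 + 49*x0^2 + 49*x0^2*x1) = (343*x1 + 98*x1^2 + 7*x1^3 + 350*x0*x1 + 99*x0*x1^2 + 7*x0*x1^3 + 7*x0^2*x1 + 7*x0^2*x1^2) := by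
    exact sub_eq_zero.mp ((mul_eq_zero.mp Z6).resolve_right GZ6)
  have NZ6 : (343*x1 + 98*x1^2 + 7*x1^3 + 350*x0*x1 + 99*x0*x1^2 + 7*x0*x1^3 + 7*x0^2*x1 + 7*x0^2*x1^2) ≠ 0 := by rw [← H6]; exact mul_ne_zero n6 DZ6
  have DZ7 : (49*x0 + 357*x0*x1 + 99*x0*x1^2 + 7*x0*x1^3 + 98*x0^2 + 455*x0^2*x1 + 406*x0^2*x1^2 + 49*x0^2*x1^3 + 49*x0^3 + 98*x0^3*x1 + 49*x0^3*x1^2) ≠ 0 := by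
    intro h0
    exact mul_ne_zero DZ6 NZ5 (by linear_combination (7 + 1*x1 + 7*x0) * h0)
  have GZ7 : ((7 + 1*x1 + 7*x0) : ℚ) ≠ 0 := by
    intro h0
    exact mul_ne_zero DZ6 NZ5 (by linear_combination (49*x0 + 357*x0*x1 + 99*x0*x1^2 + 7*x0*x1^3 + 98*x0^2 + 455*x0^2*x1 + 406*x0^2*x1^2 + 49*x0^2*x1^3 + 49*x0^3 + 98*x0^3*x1 + 49*x0^3*x1^2) * h0)
  have Z7 : (x7 * (49*x0 + 357*x0*x1 + 99*x0*x1^2 + 7*x0*x1^3 + 98*x0^2 + 455*x0^2*x1 + 406*x0^2*x1^2 + 49*x0^2*x1^3 + 49*x0^3 + 98*x0^3*x1 + 49*x0^3*x1^2) - (2401 + 3430*x1 + 1176*x1^2 + 154*x1^3 + 7*x1^4 + 4802*x0 + 6223*x0*x1 + 1827*x0*x1^2 + 197*x0*x1^3 + 7*x0*x1^4 + 2401*x0^2 + 2793*x0^2*x1 + 399*x0^2*x1^2 + 7*x0^2*x1^3)) * ((7 + 1*x1 + 7*x0) : ℚ) = 0 := by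
    linear_combination ((49 + 14*x1 + 1*x1^2 + 49*x0 + 7*x0*x1) * (49 + 14*x1 + 1*x1^2 + 98*x0 + 63*x0*x1 + 7*x0*x1^2 + 49*x0^2 + 49*x0^2*x1)) * s5 - (x7 * (49 + 14*x1 + 1*x1^2 + 98*x0 + 63*x0*x1 + 7*x0*x1^2 + 49*x0^2 + 49*x0^2*x1)) * H5 + ((49 + 14*x1 + 1*x1^2 + 49*x0 + 7*x0*x1)) * H6
  have H7 : x7 * (49*x0 + 357*x0*x1 + 99*x0*x1^2 + 7*x0*x1^3 + 98*x0^2 + 455*x0^2*x1 + 406*x0^2*x1^2 + 49*x0^2*x1^3 + 49*x0^3 + 98*x0^3*x1 + 49*x0^3*x1^2) = (2401 + 3430*x1 + 1176*x1^2 + 154*x1^3 + 7*x1^4 + 4802*x0 + 6223*x0*x1 + 1827*x0*x1^2 + 197*x0*x1^3 + 7*x0*x1^4 + 2401*x0^2 + 2793*x0^2*x1 + 399*x0^2*x1^2 + 7*x0^2*x1^3) := by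
    exact sub_eq_zero.mp ((mul_eq_zero.mp Z7).resolve_right GZ7)
  have NZ7 : (2401 + 3430*x1 + 1176*x1^2 + 154*x1^3 + 7*x1^4 + 4802*x0 + 6223*x0*x1 + 1827*x0*x1^2 + 197*x0*x1^3 + 7*x0*x1^4 + 2401*x0^2 + 2793*x0^2*x1 + 399*x0^2*x1^2 + 7*x0^2*x1^3) ≠ 0 := by rw [← H7]; exact mul_ne_zero n7 DZ7
  have DZ8 : (2401*x0*x1 + 17836*x0*x1^2 + 7350*x0*x1^3 + 1036*x0*x1^4 + 49*x0*x1^5 + 4851*x0^2*x1 + 21280*x0^2*x1^2 + 8184*x0^2*x1^3 + 1092*x0^2*x1^4 + 49*x0^2*x1^5 + 2499*x0^3*x1 + 3542*x0^3*x1^2 + 1141*x0^3*x1^3 + 98*x0^3*x1^4 + 49*x0^4*x1 + 98*x0^4*x1^2 + 49*x0^4*x1^3) ≠ 0 := by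
    intro h0
    exact mul_ne_zero DZ7 NZ6 (by linear_combination (7 + 1*x1 + 7*x0 + 7*x0*x1) * h0)
  have GZ8 : ((7 + 1*x1 + 7*x0 + 7*x0*x1) : ℚ) ≠ 0 := by
    intro h0
    exact mul_ne_zero DZ7 NZ6 (by linear_combination (2401*x0*x1 + 17836*x0*x1^2 + 7350*x0*x1^3 + 1036*x0*x1^4 + 49*x0*x1^5 + 4851*x0^2*x1 + 21280*x0^2*x1^2 + 8184*x0^2*x1^3 + 1092*x0^2*x1^4 + 49*x0^2*x1^5 + 2499*x0^3*x1 + 3542*x0^3*x1^2 + 1141*x0^3*x1^3 + 98*x0^3*x1^4 + 49*x0^4*x1 + 98*x0^4*x1^2 + 49*x0^4*x1^3) * h0)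
  have Z8 : (x8 * (2401*x0*x1 + 17836*x0*x1^2 + 7350*x0*x1^3 + 1036*x0*x1^4 + 49*x0*x1^5 + 4851*x0^2*x1 + 21280*x0^2*x1^2 + 8184*x0^2*x1^3 + 1092*x0^2*x1^4 + 49*x0^2*x1^5 + 2499*x0^3*x1 + 3542*x0^3*x1^2 + 1141*x0^3*x1^3 + 98*x0^3*x1^4 + 49*x0^4*x1 + 98*x0^4*x1^2 + 49*x0^4*x1^3) - (16807 + 26411*x1 + 11662*x1^2 + 2254*x1^3 + 203*x1^4 + 7*x1^5 + 52822*x0 + 90209*x0*x1 + 34594*x0*x1^2 + 5320*x0*x1^3 + 344*x0*x1^4 + 7*x0*x1^5 + 57624*x0^2 + 105987*x0^2*x1 + 46305*x0^2*x1^2 + 7413*x0^2*x1^3 + 399*x0^2*x1^4 + 24010*x0^3 + 46991*x0^3*x1 + 25774*x0^3*x1^2 + 2793*x0^3*x1^3 + 2401*x0^4 + 4802*x0^4*x1 + 2401*x0^4*x1^2)) * ((7 + 1*x1 + 7*x0 + 7*x0*x1) : ℚ) = 0 := by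
    linear_combination ((49 + 14*x1 + 1*x1^2 + 98*x0 + 63*x0*x1 + 7*x0*x1^2 + 49*x0^2 + 49*x0^2*x1) * (49*x0 + 357*x0*x1 + 99*x0*x1^2 + 7*x0*x1^3 + 98*x0^2 + 455*x0^2*x1 + 406*x0^2*x1^2 + 49*x0^2*x1^3 + 49*x0^3 + 98*x0^3*x1 + 49*x0^3*x1^2)) * s6 - (x8 * (49*x0 + 357*x0*x1 + 99*x0*x1^2 + 7*x0*x1^3 + 98*x0^2 + 455*x0^2*x1 + 406*x0^2*x1^2 + 49*x0^2*x1^3 + 49*x0^3 + 98*x0^3*x1 + 49*x0^3*x1^2)) * H6 + ((49 + 14*x1 + 1*x1^2 + 98*x0 + 63*x0*x1 + 7*x0*x1^2 + 49*x0^2 + 49*x0^2*x1)) * H7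
  have H8 : x8 * (2401*x0*x1 + 17836*x0*x1^2 + 7350*x0*x1^3 + 1036*x0*x1^4 + 49*x0*x1^5 + 4851*x0^2*x1 + 21280*x0^2*x1^2 + 8184*x0^2*x1^3 + 1092*x0^2*x1^4 + 49*x0^2*x1^5 + 2499*x0^3*x1 + 3542*x0^3*x1^2 + 1141*x0^3*x1^3 + 98*x0^3*x1^4 + 49*x0^4*x1 + 98*x0^4*x1^2 + 49*x0^4*x1^3) = (16807 + 26411*x1 + 11662*x1^2 + 2254*x1^3 + 203*x1^4 + 7*x1^5 + 52822*x0 + 90209*x0*x1 + 34594*x0*x1^2 + 5320*x0*x1^3 + 344*x0*x1^4 + 7*x0*x1^5 + 57624*x0^2 + 105987*x0^2*x1 + 46305*x0^2*x1^2 + 7413*x0^2*x1^3 + 399*x0^2*x1^4 + 24010*x0^3 + 46991*x0^3*x1 + 25774*x0^3*x1^2 + 2793*x0^3*x1^3 + 2401*x0^4 + 4802*x0^4*x1 + 2401*x0^4*x1^2) := by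
    exact sub_eq_zero.mp ((mul_eq_zero.mp Z8).resolve_right GZ8)
  have NZ8 : (16807 + 26411*x1 + 11662*x1^2 + 2254*x1^3 + 203*x1^4 + 7*x1^5 + 52822*x0 + 90209*x0*x1 + 34594*x0*x1^2 + 5320*x0*x1^3 + 344*x0*x1^4 + 7*x0*x1^5 + 57624*x0^2 + 105987*x0^2*x1 + 46305*x0^2*x1^2 + 7413*x0^2*x1^3 + 399*x0^2*x1^4 + 24010*x0^3 + 46991*x0^3*x1 + 25774*x0^3*x1^2 + 2793*x0^3*x1^3 + 2401*x0^4 + 4802*x0^4*x1 + 2401*x0^4*x1^2) ≠ 0 := by rw [← H8]; exact mul_ne_zero n8 DZ8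
  have DZ9 : (117649*x1 + 184877*x1^2 + 81634*x1^3 + 15778*x1^4 + 1421*x1^5 + 49*x1^6 + 355348*x0*x1 + 526848*x0*x1^2 + 215894*x0*x1^3 + 38374*x0*x1^4 + 3150*x0*x1^5 + 98*x0*x1^6 + 360150*x0^2*x1 + 503916*x0^2*x1^2 + 177835*x0^2*x1^3 + 26559*x0^2*x1^4 + 1827*x0^2*x1^5 + 49*x0^2*x1^6 + 124852*x0^3*x1 + 166796*x0^3*x1^2 + 46074*x0^3*x1^3 + 4228*x0^3*x1^4 + 98*x0^3*x1^5 + 2401*x0^4*x1 + 4851*x0^4*x1^2 + 2499*x0^4*x1^3 + 49*x0^4*x1^4) ≠ 0 := by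
    intro h0
    exact mul_ne_zero DZ8 NZ7 (by linear_combination (49*x0 + 357*x0*x1 + 99*x0*x1^2 + 7*x0*x1^3 + 49*x0^2 + 56*x0^2*x1 + 7*x0^2*x1^2) * h0)
  have GZ9 : ((49*x0 + 357*x0*x1 + 99*x0*x1^2 + 7*x0*x1^3 + 49*x0^2 + 56*x0^2*x1 + 7*x0^2*x1^2) : ℚ) ≠ 0 := by
    intro h0
    exact mul_ne_zero DZ8 NZ7 (by linear_combination (117649*x1 + 184877*x1^2 + 81634*x1^3 + 15778*x1^4 + 1421*x1^5 + 49*x1^6 + 355348*x0*x1 + 526848*x0*x1^2 + 215894*x0*x1^3 + 38374*x0*x1^4 + 3150*x0*x1^5 + 98*x0*x1^6 + 360150*x0^2*x1 + 503916*x0^2*x1^2 + 177835*x0^2*x1^3 + 26559*x0^2*x1^4 + 1827*x0^2*x1^5 + 49*x0^2*x1^6 + 124852*x0^3*x1 + 166796*x0^3*x1^2 + 46074*x0^3*x1^3 + 4228*x0^3*x1^4 + 98*x0^3*x1^5 + 2401*x0^4*x1 + 4851*x0^4*x1^2 + 2499*x0^4*x1^3 + 49*x0^4*x1^4) * h0)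
  have Z9 : (x9 * (117649*x1 + 184877*x1^2 + 81634*x1^3 + 15778*x1^4 + 1421*x1^5 + 49*x1^6 + 355348*x0*x1 + 526848*x0*x1^2 + 215894*x0*x1^3 + 38374*x0*x1^4 + 3150*x0*x1^5 + 98*x0*x1^6 + 360150*x0^2*x1 + 503916*x0^2*x1^2 + 177835*x0^2*x1^3 + 26559*x0^2*x1^4 + 1827*x0^2*x1^5 + 49*x0^2*x1^6 + 124852*x0^3*x1 + 166796*x0^3*x1^2 + 46074*x0^3*x1^3 + 4228*x0^3*x1^4 + 98*x0^3*x1^5 + 2401*x0^4*x1 + 4851*x0^4*x1^2 + 2499*x0^4*x1^3 + 49*x0^4*x1^4) - (16807 + 26411*x1 + 11662*x1^2 + 2254*x1^3 + 203*x1^4 + 7*x1^5 + 69629*x0 + 147833*x0*x1 + 191688*x0*x1^2 + 66080*x0*x1^3 + 8723*x0*x1^4 + 399*x0*x1^5 + 110446*x0^2 + 292236*x0^2*x1 + 439971*x0^2*x1^2 + 245959*x0^2*x1^3 + 46515*x0^2*x1^4 + 2793*x0^2*x1^5 + 81634*x0^3 + 253820*x0^3*x1 + 358729*x0^3*x1^2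 + 226723*x0^3*x1^3 + 42581*x0^3*x1^4 + 2401*x0^3*x1^5 + 26411*x0^4 + 90209*x0^4*x1 + 105987*x0^4*x1^2 + 46991*x0^4*x1^3 + 4802*x0^4*x1^4 + 2401*x0^5 + 7203*x0^5*x1 + 7203*x0^5*x1^2 + 2401*x0^5*x1^3)) * ((49*x0 + 357*x0*x1 + 99*x0*x1^2 + 7*x0*x1^3 + 49*x0^2 + 56*x0^2*x1 + 7*x0^2*x1^2) : ℚ) = 0 := by
    linear_combination ((49*x0 + 357*x0*x1 + 99*x0*x1^2 + 7*x0*x1^3 + 98*x0^2 + 455*x0^2*x1 + 406*x0^2*x1^2 + 49*x0^2*x1^3 + 49*x0^3 + 98*x0^3*x1 + 49*x0^3*x1^2) * (2401*x0*x1 + 17836*x0*x1^2 + 7350*x0*x1^3 + 1036*x0*x1^4 + 49*x0*x1^5 + 4851*x0^2*x1 + 21280*x0^2*x1^2 + 8184*x0^2*x1^3 + 1092*x0^2*x1^4 + 49*x0^2*x1^5 + 2499*x0^3*x1 + 3542*x0^3*x1^2 + 1141*x0^3*x1^3 + 98*x0^3*x1^4 + 49*x0^4*x1 + 98*x0^4*x1^2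 + 49*x0^4*x1^3)) * s7 - (x9 * (2401*x0*x1 + 17836*x0*x1^2 + 7350*x0*x1^3 + 1036*x0*x1^4 + 49*x0*x1^5 + 4851*x0^2*x1 + 21280*x0^2*x1^2 + 8184*x0^2*x1^3 + 1092*x0^2*x1^4 + 49*x0^2*x1^5 + 2499*x0^3*x1 + 3542*x0^3*x1^2 + 1141*x0^3*x1^3 + 98*x0^3*x1^4 + 49*x0^4*x1 + 98*x0^4*x1^2 + 49*x0^4*x1^3)) * H7 + ((49*x0 + 357*x0*x1 + 99*x0*x1^2 + 7*x0*x1^3 + 98*x0^2 + 455*x0^2*x1 + 406*x0^2*x1^2 + 49*x0^2*x1^3 + 49*x0^3 + 98*x0^3*x1 + 49*x0^3*x1^2)) * H8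
  have H9 : x9 * (117649*x1 + 184877*x1^2 + 81634*x1^3 + 15778*x1^4 + 1421*x1^5 + 49*x1^6 + 355348*x0*x1 + 526848*x0*x1^2 + 215894*x0*x1^3 + 38374*x0*x1^4 + 3150*x0*x1^5 + 98*x0*x1^6 + 360150*x0^2*x1 + 503916*x0^2*x1^2 + 177835*x0^2*x1^3 + 26559*x0^2*x1^4 + 1827*x0^2*x1^5 + 49*x0^2*x1^6 + 124852*x0^3*x1 + 166796*x0^3*x1^2 + 46074*x0^3*x1^3 + 4228*x0^3*x1^4 + 98*x0^3*x1^5 + 2401*x0^4*x1 + 4851*x0^4*x1^2 + 2499*x0^4*x1^3 + 49*x0^4*x1^4) = (16807 + 26411*x1 + 11662*x1^2 + 2254*x1^3 + 203*x1^4 + 7*x1^5 + 69629*x0 + 147833*x0*x1 + 191688*x0*x1^2 + 66080*x0*x1^3 + 8723*x0*x1^4 + 399*x0*x1^5 + 110446*x0^2 + 292236*x0^2*x1 + 439971*x0^2*x1^2 + 245959*x0^2*x1^3 + 46515*x0^2*x1^4 + 2793*x0^2*x1^5 + 81634*x0^3 + 253820*x0^3*x1 + 358729*x0^3*x1^2 +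 226723*x0^3*x1^3 + 42581*x0^3*x1^4 + 2401*x0^3*x1^5 + 26411*x0^4 + 90209*x0^4*x1 + 105987*x0^4*x1^2 + 46991*x0^4*x1^3 + 4802*x0^4*x1^4 + 2401*x0^5 + 7203*x0^5*x1 + 7203*x0^5*x1^2 + 2401*x0^5*x1^3) := by
    exact sub_eq_zero.mp ((mul_eq_zero.mp Z9).resolve_right GZ9)
  have DZ10 : (823543 + 2235331*x1 + 2168103*x1^2 + 948395*x1^3 + 217805*x1^4 + 27489*x1^5 + 1813*x1^6 + 49*x1^7 + 3411821*x0 + 9512762*x0*x1 + 9126201*x0*x1^2 + 3707830*x0*x1^3 + 761215*x0*x1^4 + 83118*x0*x1^5 + 4571*x0*x1^6 + 98*x0*x1^7 + 5411854*x0^2 + 15481648*x0^2*x1 + 15082053*x0^2*x1^2 + 6176009*x0^2*x1^3 + 1234436*x0^2*x1^4 + 122550*x0^2*x1^5 + 5257*x0^2*x1^6 + 49*x0^2*x1^7 + 4000066*x0^3 + 11721682*x0^3*x1 + 11818065*x0^3*x1^2 + 4963210*x0^3*x1^3 + 945322*x0^3*x1^4 + 81060*x0^3*x1^5 + 2499*x0^3*x1^6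 + 1294139*x0^4 + 3872813*x0^4*x1 + 4054260*x0^4*x1^2 + 1671488*x0^4*x1^3 + 200753*x0^4*x1^4 + 4851*x0^4*x1^5 + 117649*x0^5 + 355348*x0^5*x1 + 360150*x0^5*x1^2 + 124852*x0^5*x1^3 + 2401*x0^5*x1^4) ≠ 0 := by
    intro h0
    exact mul_ne_zero DZ9 NZ8 (by linear_combination (2401*x1 + 1029*x1^2 + 147*x1^3 + 7*x1^4 + 4851*x0*x1 + 1729*x0*x1^2 + 197*x0*x1^3 + 7*x0*x1^4 + 2499*x0^2*x1 + 749*x0^2*x1^2 + 56*x0^2*x1^3 + 49*x0^3*x1 + 49*x0^3*x1^2) * h0)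
  have GZ10 : ((2401*x1 + 1029*x1^2 + 147*x1^3 + 7*x1^4 + 4851*x0*x1 + 1729*x0*x1^2 + 197*x0*x1^3 + 7*x0*x1^4 + 2499*x0^2*x1 + 749*x0^2*x1^2 + 56*x0^2*x1^3 + 49*x0^3*x1 + 49*x0^3*x1^2) : ℚ) ≠ 0 := by
    intro h0
    exact mul_ne_zero DZ9 NZ8 (by linear_combination (823543 + 2235331*x1 + 2168103*x1^2 + 948395*x1^3 + 217805*x1^4 + 27489*x1^5 + 1813*x1^6 + 49*x1^7 + 3411821*x0 + 9512762*x0*x1 + 9126201*x0*x1^2 + 3707830*x0*x1^3 + 761215*x0*x1^4 + 83118*x0*x1^5 + 4571*x0*x1^6 + 98*x0*x1^7 + 5411854*x0^2 + 15481648*x0^2*x1 + 15082053*x0^2*x1^2 + 6176009*x0^2*x1^3 + 1234436*x0^2*x1^4 + 122550*x0^2*x1^5 + 5257*x0^2*x1^6 + 49*x0^2*x1^7 + 4000066*x0^3 + 11721682*x0^3*x1 + 11818065*x0^3*x1^2 + 4963210*x0^3*x1^3 + 945322*x0^3*x1^4 + 81060*x0^3*x1^5 + 2499*x0^3*x1^6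 + 1294139*x0^4 + 3872813*x0^4*x1 + 4054260*x0^4*x1^2 + 1671488*x0^4*x1^3 + 200753*x0^4*x1^4 + 4851*x0^4*x1^5 + 117649*x0^5 + 355348*x0^5*x1 + 360150*x0^5*x1^2 + 124852*x0^5*x1^3 + 2401*x0^5*x1^4) * h0)
  have Z10 : (x10 * (823543 + 2235331*x1 + 2168103*x1^2 + 948395*x1^3 + 217805*x1^4 + 27489*x1^5 + 1813*x1^6 + 49*x1^7 + 3411821*x0 + 9512762*x0*x1 + 9126201*x0*x1^2 + 3707830*x0*x1^3 + 761215*x0*x1^4 + 83118*x0*x1^5 + 4571*x0*x1^6 + 98*x0*x1^7 + 5411854*x0^2 + 15481648*x0^2*x1 + 15082053*x0^2*x1^2 + 6176009*x0^2*x1^3 + 1234436*x0^2*x1^4 + 122550*x0^2*x1^5 + 5257*x0^2*x1^6 + 49*x0^2*x1^7 + 4000066*x0^3 + 11721682*x0^3*x1 + 11818065*x0^3*x1^2 + 4963210*x0^3*x1^3 + 945322*x0^3*x1^4 + 81060*x0^3*x1^5 + 2499*x0^3*x1^6 + 1294139*x0^4 + 3872813*x0^4*x1 + 4054260*x0^4*x1^2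 + 1671488*x0^4*x1^3 + 200753*x0^4*x1^4 + 4851*x0^4*x1^5 + 117649*x0^5 + 355348*x0^5*x1 + 360150*x0^5*x1^2 + 124852*x0^5*x1^3 + 2401*x0^5*x1^4) - (16807*x0 + 967603*x0*x1 + 7255479*x0*x1^2 + 9714299*x0*x1^3 + 4126493*x0*x1^4 + 784497*x0*x1^5 + 70021*x0*x1^6 + 2401*x0*x1^7 + 69629*x0^2 + 3021830*x0^2*x1 + 17241189*x0^2*x1^2 + 21626374*x0^2*x1^3 + 8892031*x0^2*x1^4 + 1646610*x0^2*x1^5 + 143423*x0^2*x1^6 + 4802*x0^2*x1^7 + 110446*x0^3 + 3269476*x0^3*x1 + 12979365*x0^3*x1^2 + 14618933*x0^3*x1^3 + 5722640*x0^3*x1^4 + 1002246*x0^3*x1^5 + 80605*x0^3*x1^6 + 2401*x0^3*x1^7 + 81634*x0^4 + 1353478*x0^4*x1 + 3271485*x0^4*x1^2 + 2951074*x0^4*x1^3 + 1100638*x0^4*x1^4 + 156408*x0^4*x1^5 + 7203*x0^4*x1^6 + 26411*x0^5 + 147833*x0^5*x1 + 292236*x0^5*x1^2 + 253820*x0^5*x1^3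 + 90209*x0^5*x1^4 + 7203*x0^5*x1^5 + 2401*x0^6 + 9604*x0^6*x1 + 14406*x0^6*x1^2 + 9604*x0^6*x1^3 + 2401*x0^6*x1^4)) * ((2401*x1 + 1029*x1^2 + 147*x1^3 + 7*x1^4 + 4851*x0*x1 + 1729*x0*x1^2 + 197*x0*x1^3 + 7*x0*x1^4 + 2499*x0^2*x1 + 749*x0^2*x1^2 + 56*x0^2*x1^3 + 49*x0^3*x1 + 49*x0^3*x1^2) : ℚ) = 0 := by
    linear_combination ((2401*x0*x1 + 17836*x0*x1^2 + 7350*x0*x1^3 + 1036*x0*x1^4 + 49*x0*x1^5 + 4851*x0^2*x1 + 21280*x0^2*x1^2 + 8184*x0^2*x1^3 + 1092*x0^2*x1^4 + 49*x0^2*x1^5 + 2499*x0^3*x1 + 3542*x0^3*x1^2 + 1141*x0^3*x1^3 + 98*x0^3*x1^4 + 49*x0^4*x1 + 98*x0^4*x1^2 + 49*x0^4*x1^3) * (117649*x1 + 184877*x1^2 + 81634*x1^3 + 15778*x1^4 + 1421*x1^5 + 49*x1^6 + 355348*x0*x1 + 526848*x0*x1^2 + 215894*x0*x1^3 + 38374*x0*x1^4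 + 3150*x0*x1^5 + 98*x0*x1^6 + 360150*x0^2*x1 + 503916*x0^2*x1^2 + 177835*x0^2*x1^3 + 26559*x0^2*x1^4 + 1827*x0^2*x1^5 + 49*x0^2*x1^6 + 124852*x0^3*x1 + 166796*x0^3*x1^2 + 46074*x0^3*x1^3 + 4228*x0^3*x1^4 + 98*x0^3*x1^5 + 2401*x0^4*x1 + 4851*x0^4*x1^2 + 2499*x0^4*x1^3 + 49*x0^4*x1^4)) * s8 - (x10 * (117649*x1 + 184877*x1^2 + 81634*x1^3 + 15778*x1^4 + 1421*x1^5 + 49*x1^6 + 355348*x0*x1 + 526848*x0*x1^2 + 215894*x0*x1^3 + 38374*x0*x1^4 + 3150*x0*x1^5 + 98*x0*x1^6 + 360150*x0^2*x1 + 503916*x0^2*x1^2 + 177835*x0^2*x1^3 + 26559*x0^2*x1^4 + 1827*x0^2*x1^5 + 49*x0^2*x1^6 + 124852*x0^3*x1 + 166796*x0^3*x1^2 + 46074*x0^3*x1^3 + 4228*x0^3*x1^4 + 98*x0^3*x1^5 + 2401*x0^4*x1 + 4851*x0^4*x1^2 + 2499*x0^4*x1^3 + 49*x0^4*x1^4))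 * H8 + ((2401*x0*x1 + 17836*x0*x1^2 + 7350*x0*x1^3 + 1036*x0*x1^4 + 49*x0*x1^5 + 4851*x0^2*x1 + 21280*x0^2*x1^2 + 8184*x0^2*x1^3 + 1092*x0^2*x1^4 + 49*x0^2*x1^5 + 2499*x0^3*x1 + 3542*x0^3*x1^2 + 1141*x0^3*x1^3 + 98*x0^3*x1^4 + 49*x0^4*x1 + 98*x0^4*x1^2 + 49*x0^4*x1^3)) * H9
  have H10 : x10 * (823543 + 2235331*x1 + 2168103*x1^2 + 948395*x1^3 + 217805*x1^4 + 27489*x1^5 + 1813*x1^6 + 49*x1^7 + 3411821*x0 + 9512762*x0*x1 + 9126201*x0*x1^2 + 3707830*x0*x1^3 + 761215*x0*x1^4 + 83118*x0*x1^5 + 4571*x0*x1^6 + 98*x0*x1^7 + 5411854*x0^2 + 15481648*x0^2*x1 + 15082053*x0^2*x1^2 + 6176009*x0^2*x1^3 + 1234436*x0^2*x1^4 + 122550*x0^2*x1^5 + 5257*x0^2*x1^6 + 49*x0^2*x1^7 + 4000066*x0^3 + 11721682*x0^3*x1 + 11818065*x0^3*x1^2 + 4963210*x0^3*x1^3 +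 945322*x0^3*x1^4 + 81060*x0^3*x1^5 + 2499*x0^3*x1^6 + 1294139*x0^4 + 3872813*x0^4*x1 + 4054260*x0^4*x1^2 + 1671488*x0^4*x1^3 + 200753*x0^4*x1^4 + 4851*x0^4*x1^5 + 117649*x0^5 + 355348*x0^5*x1 + 360150*x0^5*x1^2 + 124852*x0^5*x1^3 + 2401*x0^5*x1^4) = (16807*x0 + 967603*x0*x1 + 7255479*x0*x1^2 + 9714299*x0*x1^3 + 4126493*x0*x1^4 + 784497*x0*x1^5 + 70021*x0*x1^6 + 2401*x0*x1^7 + 69629*x0^2 + 3021830*x0^2*x1 + 17241189*x0^2*x1^2 + 21626374*x0^2*x1^3 + 8892031*x0^2*x1^4 + 1646610*x0^2*x1^5 + 143423*x0^2*x1^6 + 4802*x0^2*x1^7 + 110446*x0^3 + 3269476*x0^3*x1 + 12979365*x0^3*x1^2 + 14618933*x0^3*x1^3 + 5722640*x0^3*x1^4 + 1002246*x0^3*x1^5 + 80605*x0^3*x1^6 + 2401*x0^3*x1^7 + 81634*x0^4 + 1353478*x0^4*x1 + 3271485*x0^4*x1^2 + 2951074*x0^4*x1^3 + 1100638*x0^4*x1^4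 + 156408*x0^4*x1^5 + 7203*x0^4*x1^6 + 26411*x0^5 + 147833*x0^5*x1 + 292236*x0^5*x1^2 + 253820*x0^5*x1^3 + 90209*x0^5*x1^4 + 7203*x0^5*x1^5 + 2401*x0^6 + 9604*x0^6*x1 + 14406*x0^6*x1^2 + 9604*x0^6*x1^3 + 2401*x0^6*x1^4) := by
    exact sub_eq_zero.mp ((mul_eq_zero.mp Z10).resolve_right GZ10)
  constructor
  · have g : x9 * (117649*x1 + 184877*x1^2 + 81634*x1^3 + 15778*x1^4 + 1421*x1^5 + 49*x1^6 + 355348*x0*x1 + 526848*x0*x1^2 + 215894*x0*x1^3 + 38374*x0*x1^4 + 3150*x0*x1^5 + 98*x0*x1^6 + 360150*x0^2*x1 + 503916*x0^2*x1^2 + 177835*x0^2*x1^3 + 26559*x0^2*x1^4 + 1827*x0^2*x1^5 + 49*x0^2*x1^6 + 124852*x0^3*x1 + 166796*x0^3*x1^2 + 46074*x0^3*x1^3 + 4228*x0^3*x1^4 + 98*x0^3*x1^5 + 2401*x0^4*x1 + 4851*x0^4*x1^2 + 2499*x0^4*x1^3 + 49*x0^4*x1^4) = x0 * (117649*x1 +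 184877*x1^2 + 81634*x1^3 + 15778*x1^4 + 1421*x1^5 + 49*x1^6 + 355348*x0*x1 + 526848*x0*x1^2 + 215894*x0*x1^3 + 38374*x0*x1^4 + 3150*x0*x1^5 + 98*x0*x1^6 + 360150*x0^2*x1 + 503916*x0^2*x1^2 + 177835*x0^2*x1^3 + 26559*x0^2*x1^4 + 1827*x0^2*x1^5 + 49*x0^2*x1^6 + 124852*x0^3*x1 + 166796*x0^3*x1^2 + 46074*x0^3*x1^3 + 4228*x0^3*x1^4 + 98*x0^3*x1^5 + 2401*x0^4*x1 + 4851*x0^4*x1^2 + 2499*x0^4*x1^3 + 49*x0^4*x1^4) := by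
      linear_combination H9 + (343 + 147*x1 + 21*x1^2 + 1*x1^3 + 1029*x0 + 637*x0*x1 - 224*x0*x1^2 - 91*x0*x1^3 - 7*x0*x1^4 + 1029*x0^2 + 833*x0^2*x1 - 252*x0^2*x1^2 - 99*x0^2*x1^3 - 7*x0^2*x1^4 + 343*x0^3 + 343*x0^3*x1 - 7*x0^3*x1^2 - 7*x0^3*x1^3) * hc
    exact mul_right_cancel₀ DZ9 g
  · have g : x10 * (823543 + 2235331*x1 + 2168103*x1^2 + 948395*x1^3 + 217805*x1^4 + 27489*x1^5 + 1813*x1^6 + 49*x1^7 + 3411821*x0 + 9512762*x0*x1 + 9126201*x0*x1^2 + 3707830*x0*x1^3 + 761215*x0*x1^4 + 83118*x0*x1^5 + 4571*x0*x1^6 + 98*x0*x1^7 + 5411854*x0^2 + 15481648*x0^2*x1 + 15082053*x0^2*x1^2 + 6176009*x0^2*x1^3 + 1234436*x0^2*x1^4 + 122550*x0^2*x1^5 + 5257*x0^2*x1^6 + 49*x0^2*x1^7 + 4000066*x0^3 + 11721682*x0^3*x1 + 11818065*x0^3*x1^2 + 4963210*x0^3*x1^3 + 945322*x0^3*x1^4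 + 81060*x0^3*x1^5 + 2499*x0^3*x1^6 + 1294139*x0^4 + 3872813*x0^4*x1 + 4054260*x0^4*x1^2 + 1671488*x0^4*x1^3 + 200753*x0^4*x1^4 + 4851*x0^4*x1^5 + 117649*x0^5 + 355348*x0^5*x1 + 360150*x0^5*x1^2 + 124852*x0^5*x1^3 + 2401*x0^5*x1^4) = x1 * (823543 + 2235331*x1 + 2168103*x1^2 + 948395*x1^3 + 217805*x1^4 + 27489*x1^5 + 1813*x1^6 + 49*x1^7 + 3411821*x0 + 9512762*x0*x1 + 9126201*x0*x1^2 + 3707830*x0*x1^3 + 761215*x0*x1^4 + 83118*x0*x1^5 + 4571*x0*x1^6 + 98*x0*x1^7 + 5411854*x0^2 + 15481648*x0^2*x1 + 15082053*x0^2*x1^2 + 6176009*x0^2*x1^3 + 1234436*x0^2*x1^4 + 122550*x0^2*x1^5 + 5257*x0^2*x1^6 + 49*x0^2*x1^7 + 4000066*x0^3 + 11721682*x0^3*x1 + 11818065*x0^3*x1^2 + 4963210*x0^3*x1^3 + 945322*x0^3*x1^4 + 81060*x0^3*x1^5 + 2499*x0^3*x1^6 + 1294139*x0^4 + 3872813*x0^4*x1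 + 4054260*x0^4*x1^2 + 1671488*x0^4*x1^3 + 200753*x0^4*x1^4 + 4851*x0^4*x1^5 + 117649*x0^5 + 355348*x0^5*x1 + 360150*x0^5*x1^2 + 124852*x0^5*x1^3 + 2401*x0^5*x1^4) := by
      linear_combination H10 + (-16807*x1 - 26411*x1^2 - 11662*x1^3 - 2254*x1^4 - 203*x1^5 - 7*x1^6 + 343*x0 - 31066*x0*x1 - 47313*x0*x1^2 - 18864*x0*x1^3 - 3199*x0*x1^4 - 246*x0*x1^5 - 7*x0*x1^6 + 1029*x0^2 - 10682*x0^2*x1 - 15463*x0^2*x1^2 - 4095*x0^2*x1^3 - 350*x0^2*x1^4 - 7*x0^2*x1^5 + 1029*x0^3 + 4606*x0^3*x1 + 6468*x0^3*x1^2 + 3234*x0^3*x1^3 + 343*x0^3*x1^4 + 343*x0^4 + 1029*x0^4*x1 + 1029*x0^4*x1^2 + 343*x0^4*x1^3) * hc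
    exact mul_right_cancel₀ DZ10 g

/-- For `a = 7`, every rational point on the curve
`a(x+1)(y+1)(x+y+a) - (a-1)(a²-a+1)xy = 0` with all iterates of `F_7` defined
is 9-periodic. -/
theorem lyness_curve_implies_period_nine (x y : ℚ)
    (hcurve : 7 * (x + 1) * (y + 1) * (x + y + 7)
        - (7 - 1) * (7^2 - 7 + 1) * x * y = 0)
    (hdef : ∀ k, k < 9 → ((lyness 7)^[k] (x, y)).1 ≠ 0) :
    (lyness 7)^[9] (x, y) = (x, y) := by
  have it : ∀ k : ℕ, (lyness 7)^[k+1] (x, y)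
      = (((lyness 7)^[k] (x, y)).2,
         (7 + ((lyness 7)^[k] (x, y)).2) / ((lyness 7)^[k] (x, y)).1) := by
    intro k
    rw [Function.iterate_succ_apply']
    rfl
  have c1 : ∀ k : ℕ, ((lyness 7)^[k+1] (x, y)).1 = ((lyness 7)^[k] (x, y)).2 :=
    fun k => by rw [it k]
  have c2 : ∀ k : ℕ, ((lyness 7)^[k+1] (x, y)).2
      = (7 + ((lyness 7)^[k] (x, y)).2) / ((lyness 7)^[k] (x, y)).1 :=
    fun k => by rw [it k]
  have hs : ∀ k : ℕ, k < 9 →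
      ((lyness 7)^[k+2] (x, y)).1 * ((lyness 7)^[k] (x, y)).1
        = 7 + ((lyness 7)^[k+1] (x, y)).1 := by
    intro k hk
    rw [show k+2 = (k+1)+1 from rfl, c1 (k+1), c2 k, c1 k]
    exact div_mul_cancel₀ _ (hdef k hk)
  have s8 : ((lyness 7)^[9] (x, y)).2 * ((lyness 7)^[8] (x, y)).1
      = 7 + ((lyness 7)^[9] (x, y)).1 := by
    rw [c2 8, c1 8]
    exact div_mul_cancel₀ _ (hdef 8 (by norm_num))
  have e0 : ((lyness 7)^[0] (x, y)).1 = x := rfl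
  have e1 : ((lyness 7)^[1] (x, y)).1 = y := rfl
  have main := lyness_key (((lyness 7)^[0] (x, y)).1) (((lyness 7)^[1] (x, y)).1)
    (((lyness 7)^[2] (x, y)).1) (((lyness 7)^[3] (x, y)).1) (((lyness 7)^[4] (x, y)).1)
    (((lyness 7)^[5] (x, y)).1) (((lyness 7)^[6] (x, y)).1) (((lyness 7)^[7] (x, y)).1)
    (((lyness 7)^[8] (x, y)).1) (((lyness 7)^[9] (x, y)).1) (((lyness 7)^[9] (x, y)).2)
    (hdef 0 (by norm_num)) (hdef 1 (by norm_num)) (hdef 2 (by norm_num))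
    (hdef 3 (by norm_num)) (hdef 4 (by norm_num)) (hdef 5 (by norm_num))
    (hdef 6 (by norm_num)) (hdef 7 (by norm_num)) (hdef 8 (by norm_num))
    (hs 0 (by norm_num)) (hs 1 (by norm_num)) (hs 2 (by norm_num))
    (hs 3 (by norm_num)) (hs 4 (by norm_num)) (hs 5 (by norm_num))
    (hs 6 (by norm_num)) (hs 7 (by norm_num)) s8 (by rw [e0, e1]; exact hcurve)
  obtain ⟨m1, m2⟩ := main
  have : (lyness 7)^[9] (x, y)
      = (((lyness 7)^[9] (x, y)).1, ((lyness 7)^[9] (x, y)).2) := rfl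
  rw [this, m1, m2, e0, e1]
end

section
/- Let f(t) = (1−a)/(t+a) be a Möbius map on ℚ ∪ {∞} with a ∈ ℚ, a ∉ {0,1}. Then f is not globally periodic of any period p ≥ 2, i.e. no iterate f^p with p ≥ 2 equals the identity. -/
open Matrix

private lemma pow_jordan (n : ℕ) :
    (!![0, -1; 1, 2] : Matrix (Fin 2) (Fin 2) ℚ) ^ n
      = !![1 - (n:ℚ), -(n:ℚ); (n:ℚ), (n:ℚ) + 1] := by
  induction n with
  | zero => rw [pow_zero, Matrix.one_fin_two]; norm_num
  | succ n ih =>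
    rw [pow_succ, ih]
    ext i j
    fin_cases i <;> fin_cases j <;>
      simp [Matrix.mul_apply, Fin.sum_univ_two] <;> push_cast <;> ring

/-- The Möbius map `f(t) = (1-a)/(t+a)` on `ℚ ∪ {∞}`, represented by the matrix
`!![0, 1-a; 1, a]`. An iterate `f^p` is the identity on `ℚ ∪ {∞}` if and only if
the corresponding matrix power is a scalar matrix. The statement: for `a ≠ 0, 1`,
no iterate `f^p` with `p ≥ 2` equals the identity. -/
theorem mobius_not_periodic (a : ℚ) (ha0 : a ≠ 0) (ha1 : a ≠ 1) (p : ℕ) (hp : 2 ≤ p) :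
    ¬ ∃ k : ℚ, (!![0, 1 - a; 1, a] : Matrix (Fin 2) (Fin 2) ℚ) ^ p
        = k • (1 : Matrix (Fin 2) (Fin 2) ℚ) := by
  rintro ⟨k, hk⟩
  set M : Matrix (Fin 2) (Fin 2) ℚ := !![0, 1 - a; 1, a] with hM
  have e1 : M.mulVec ![1 - a, 1] = ![1 - a, 1] := by
    funext i; fin_cases i <;>
      simp [hM, Matrix.mulVec, dotProduct, Fin.sum_univ_two] <;> ring
  have e2 : M.mulVec ![1, -1] = (a - 1) • ![1, -1] := by
    funext i; fin_cases i <;>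
      simp [hM, Matrix.mulVec, dotProduct, Fin.sum_univ_two] <;> ring
  have hv1 : ∀ n : ℕ, (M ^ n).mulVec ![1 - a, 1] = ![1 - a, 1] := by
    intro n
    induction n with
    | zero => simp
    | succ n ih => rw [pow_succ', ← Matrix.mulVec_mulVec, ih, e1]
  have hv2 : ∀ n : ℕ, (M ^ n).mulVec ![1, -1] = (a - 1) ^ n • ![1, -1] := by
    intro n
    induction n with
    | zero => simp
    | succ n ih =>
      rw [pow_succ', ← Matrix.mulVec_mulVec, ih, Matrix.mulVec_smul, e2,
        smul_smul, ← pow_succ]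
  have hk1 : k = 1 := by
    have := hv1 p
    rw [hk, Matrix.smul_mulVec, Matrix.one_mulVec] at this
    have := congrFun this 1
    simpa using this
  have hpow : (a - 1) ^ p = 1 := by
    have := hv2 p
    rw [hk, hk1, Matrix.smul_mulVec, Matrix.one_mulVec, one_smul] at this
    have := congrFun this 0
    simpa using this.symm
  have hp0 : p ≠ 0 := by omega
  rcases (pow_eq_one_iff_of_ne_zero hp0).mp hpow with h | ⟨h, -⟩
  · -- a = 2 : Jordan block case
    have ha2 : a = 2 := by have := sub_eq_iff_eq_add.mp h; linarith
    rw [hk1, one_smul] at hk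
    have : M = !![0, -1; 1, 2] := by rw [hM, ha2]; norm_num
    rw [this, pow_jordan] at hk
    have := congrFun (congrFun hk 1) 0
    simp [Matrix.one_apply] at this
    omega
  · exact ha0 (by linarith)
end

section
/- For a = 2/3, the Möbius map f(x) = (−x − 1/3)/x on ℚ ∪ {∞} is globally 6-periodic: f⁶ = id, and f² ≠ id, f³ ≠ id. Consequently the Lyness map F_{2/3} has continua of 12-periodic points. -/
/-! On the invariant line `y = -x - 1`, `F_a²` acts as the Möbius transformation of the matrix
`!![-1, a - 1; 1, 0]`. Möbius transformations compose like their matrices and scalar matrices act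
trivially, so `M⁶ = -1/27 • 1` for `a = 2/3` gives `f⁶ = id` along every orbit avoiding the pole,
hence `F_{2/3}¹² = id` on the line. -/

section Mobius

variable {K : Type*} [Field K]

/-- The action on the affine chart of `ℙ¹(K)`; a pole is sent to `0` (`x / 0 = 0`), which is why
the composition laws below need the denominators to be nonzero. -/
def mobius (A : Matrix (Fin 2) (Fin 2) K) (x : K) : K :=
  (A 0 0 * x + A 0 1) / (A 1 0 * x + A 1 1)

theorem mobius_mul (A B : Matrix (Fin 2) (Fin 2) K) {x : K}
    (hx : B 1 0 * x + B 1 1 ≠ 0) : mobius (A * B) x = mobius A (mobius B x) := by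
  simp only [mobius, Matrix.mul_apply, Fin.sum_univ_two]
  rw [← div_div_div_cancel_right₀ hx]
  congr 1 <;> field_simp <;> ring

theorem mobius_smul_one {k : K} (hk : k ≠ 0) (x : K) :
    mobius (k • 1) x = x := by
  simp [mobius, hk]

theorem mobius_pow (A : Matrix (Fin 2) (Fin 2) K) (n : ℕ) (x : K)
    (h : ∀ m < n, A 1 0 * (mobius A)^[m] x + A 1 1 ≠ 0) :
    mobius (A ^ n) x = (mobius A)^[n] x := by
  induction n generalizing x with
  | zero => simp [mobius]
  | succ n ih =>
    rw [pow_succ, mobius_mul _ _ (by simpa using h 0 n.succ_pos), Function.iterate_succ_apply,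
      ih _ fun m hm => h (m + 1) (by omega)]

end Mobius

theorem Matrix.not_exists_eq_smul_one_of_apply_ne_zero {n R : Type*} [DecidableEq n] [Semiring R]
    {A : Matrix n n R} {i j : n} (hij : i ≠ j) (h : A i j ≠ 0) : ¬ ∃ k : R, A = k • 1 := by
  rintro ⟨k, rfl⟩
  simp [Matrix.one_apply_ne hij] at h

def lynessMatrix (a : ℚ) : Matrix (Fin 2) (Fin 2) ℚ := !![-1, a - 1; 1, 0]

theorem lynessMatrix_two_thirds : lynessMatrix (2/3) = !![-1, -1/3; 1, 0] := by
  norm_num [lynessMatrix]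

theorem lynessMatrix_sq (a : ℚ) : lynessMatrix a ^ 2 = !![a, 1 - a; -1, a - 1] := by
  rw [sq, lynessMatrix, Matrix.mul_fin_two]; congr <;> ring

theorem lynessMatrix_pow_three (a : ℚ) :
    lynessMatrix a ^ 3 = !![1 - 2 * a, a * (a - 1); a, 1 - a] := by
  rw [pow_succ, lynessMatrix_sq, lynessMatrix, Matrix.mul_fin_two]; congr <;> ring

theorem lynessMatrix_two_thirds_pow_six : lynessMatrix (2/3) ^ 6 = (-1/27 : ℚ) • 1 := by
  rw [show 6 = 3 * 2 from rfl, pow_mul, lynessMatrix_pow_three, sq, Matrix.mul_fin_two,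
    Matrix.one_fin_two, Matrix.smul_of]
  norm_num

theorem mobius_lynessMatrix (a x : ℚ) : mobius (lynessMatrix a) x = (-x + a - 1) / x := by
  simp [mobius, lynessMatrix]; ring

theorem lyness_lyness_on_line (a : ℚ) {u : ℚ} (hu : u ≠ 0) (hu1 : -u - 1 ≠ 0) :
    lyness a (lyness a (u, -u - 1)) =
      (mobius (lynessMatrix a) u, -mobius (lynessMatrix a) u - 1) := by
  rw [mobius_lynessMatrix]
  simp only [lyness, Prod.mk.injEq]
  constructor
  · ring
  · field_simp
    ring

theorem lyness_iterate_two_mul_on_line (a x : ℚ) (n : ℕ)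
    (h : ∀ m < 2 * n, ((lyness a)^[m] (x, -x - 1)).1 ≠ 0) :
    (lyness a)^[2 * n] (x, -x - 1) =
      ((mobius (lynessMatrix a))^[n] x, -(mobius (lynessMatrix a))^[n] x - 1) := by
  induction n with
  | zero => rfl
  | succ n ih =>
    have hprev := ih fun m hm => h m (by omega)
    have hu := h (2 * n) (by omega)
    have hu1 := h (2 * n + 1) (by omega)
    rw [hprev] at hu
    rw [Function.iterate_succ_apply', hprev] at hu1
    rw [show 2 * (n + 1) = 2 + 2 * n by ring, Function.iterate_add_apply, hprev,
      Function.iterate_succ_apply' _ n]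
    exact lyness_lyness_on_line a hu hu1

/-- For `a = 2/3`, the Möbius map `f(x) = (-x - 1/3)/x` on `ℚ ∪ {∞}`, represented
by the matrix `!![-1, -1/3; 1, 0]`, is globally 6-periodic (`f⁶ = id`, i.e. the
sixth power of the matrix is a nonzero scalar matrix, and `f² ≠ id`, `f³ ≠ id`).
Consequently every point of the line `x + y + 1 = 0` with all iterates of
`F_{2/3}` defined is a 12-periodic point of the Lyness map `F_{2/3}`. -/
theorem mobius_six_periodic :
    (∃ k : ℚ, k ≠ 0 ∧ (!![-1, -1/3; 1, 0] : Matrix (Fin 2) (Fin 2) ℚ) ^ 6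
        = k • (1 : Matrix (Fin 2) (Fin 2) ℚ)) ∧
    (¬ ∃ k : ℚ, (!![-1, -1/3; 1, 0] : Matrix (Fin 2) (Fin 2) ℚ) ^ 2
        = k • (1 : Matrix (Fin 2) (Fin 2) ℚ)) ∧
    (¬ ∃ k : ℚ, (!![-1, -1/3; 1, 0] : Matrix (Fin 2) (Fin 2) ℚ) ^ 3
        = k • (1 : Matrix (Fin 2) (Fin 2) ℚ)) ∧
    (∀ x y : ℚ, x + y + 1 = 0 →
      (∀ n, n < 12 → ((lyness (2/3))^[n] (x, y)).1 ≠ 0) →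
      (lyness (2/3))^[12] (x, y) = (x, y)) := by
  rw [← lynessMatrix_two_thirds]
  refine ⟨⟨-1/27, by norm_num, lynessMatrix_two_thirds_pow_six⟩,
    Matrix.not_exists_eq_smul_one_of_apply_ne_zero (i := 1) (j := 0) (by decide) ?_,
    Matrix.not_exists_eq_smul_one_of_apply_ne_zero (i := 1) (j := 0) (by decide) ?_, ?_⟩
  · simp [lynessMatrix_sq]
  · norm_num [lynessMatrix_pow_three]
  intro x y hline h
  obtain rfl : y = -x - 1 := by linarith
  have horbit (k : ℕ) (hk : k ≤ 6) := lyness_iterate_two_mul_on_line (2/3) x k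
    fun m hm => h m (by omega)
  -- the denominators of `f` along the orbit are the first coordinates of the even iterates
  have hden : ∀ m < 6, lynessMatrix (2/3) 1 0 * (mobius (lynessMatrix (2/3)))^[m] x
      + lynessMatrix (2/3) 1 1 ≠ 0 := fun m hm => by
    simpa [lynessMatrix, horbit m hm.le] using h (2 * m) (by omega)
  have hperiod : (mobius (lynessMatrix (2/3)))^[6] x = x := by
    rw [← mobius_pow _ 6 x hden, lynessMatrix_two_thirds_pow_six, mobius_smul_one (by norm_num)]
  simpa [hperiod] using horbit 6 le_rfl
end

section
/- The Lyness map F_a has no points of prime period 4: for any a ∈ ℚ and any (x,y) with all iterates defined, if F_a⁴(x,y) = (x,y) then F_a²(x,y) = (x,y). -/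
/-- The Lyness map has no points of prime period 4: if all iterates are defined
and `F_a⁴(x,y) = (x,y)`, then already `F_a²(x,y) = (x,y)`. -/
theorem lyness_no_period_four (a x y : ℚ)
    (hdef : ∀ k, k < 4 → ((lyness a)^[k] (x, y)).1 ≠ 0)
    (h : (lyness a)^[4] (x, y) = (x, y)) :
    (lyness a)^[2] (x, y) = (x, y) := by
  have hx : x ≠ 0 := by simpa [lyness] using hdef 0 (by norm_num)
  have hy : y ≠ 0 := by simpa [lyness] using hdef 1 (by norm_num)
  set z : ℚ := (a + y) / x with hzdef
  set w : ℚ := (a + z) / y with hwdef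
  have hz : z ≠ 0 := by simpa [lyness, hzdef] using hdef 2 (by norm_num)
  have hw : w ≠ 0 := by
    simpa [lyness, Function.iterate_succ_apply, hzdef, hwdef] using hdef 3 (by norm_num)
  have e1 : x * z = a + y := by
    rw [hzdef, mul_div_cancel₀ _ hx]
  have e2 : y * w = a + z := by
    rw [hwdef, mul_div_cancel₀ _ hy]
  have h4 : (lyness a)^[4] (x, y) = ((a + w) / z, (a + (a + w) / z) / w) := by
    simp [Function.iterate_succ_apply, lyness, hzdef, hwdef]
  rw [h4, Prod.mk.injEq] at h
  obtain ⟨h1, h2⟩ := h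
  have e3 : x * z = a + w := by
    field_simp at h1
    linarith [h1]
  have e4 : y * w = a + x := by
    rw [h1] at h2
    field_simp at h2
    linarith [h2]
  have hwy : w = y := by linarith [e1, e3]
  have hzx : z = x := by linarith [e2, e4]
  have h2it : (lyness a)^[2] (x, y) = (z, w) := by
    simp [Function.iterate_succ_apply, lyness, hzdef, hwdef]
  rw [h2it, hzx, hwy]
end

section
/- The projective change of variables X = −(b/(c+1))·z, Y = −(bc/(c+1))·(y+z), Z = −(c/(c+1))·(x+y) − z transforms the projective Lyness curve (x+z)(y+z)(x+y+az) − h·xyz = 0 into the Tate normal form Y²Z + (1−c)XYZ − bYZ² = X³ − bX²Z, provided h = −b/c² and a = (c²+c−b)/c², for c ≠ 0, c ≠ −1, b ≠ 0. That is, a point [x:y:z] satisfies the Lyness curve equation if and only if [X:Y:Z] satisfies the Tate equation. -/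
set_option maxHeartbeats 1000000 in
/-- The projective change of variables `X = -(b/(c+1))z`, `Y = -(bc/(c+1))(y+z)`,
`Z = -(c/(c+1))(x+y) - z` transforms the Lyness curve
`(x+z)(y+z)(x+y+az) = h·xyz` (with `h = -b/c²`, `a = (c²+c-b)/c²`) into the Tate
normal form `Y²Z + (1-c)XYZ - bYZ² = X³ - bX²Z`. -/
theorem lyness_to_tate {K : Type*} [Field K] (h2 : (2 : K) ≠ 0) (h3 : (3 : K) ≠ 0)
    (b c x y z : K) (hb : b ≠ 0) (hc : c ≠ 0) (hc1 : c + 1 ≠ 0)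
    (a h : K) (hA : a = (c^2 + c - b) / c^2) (hH : h = -b / c^2)
    (X Y Z : K)
    (hX : X = -(b / (c + 1)) * z)
    (hY : Y = -(b * c / (c + 1)) * (y + z))
    (hZ : Z = -(c / (c + 1)) * (x + y) - z) :
    (x + z) * (y + z) * (x + y + a * z) - h * x * y * z = 0 ↔
    Y^2 * Z + (1 - c) * X * Y * Z - b * Y * Z^2 = X^3 - b * X^2 * Z := by
  have hc2 : (c : K)^2 ≠ 0 := pow_ne_zero 2 hc
  have hc13 : ((c : K) + 1)^3 ≠ 0 := pow_ne_zero 3 hc1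
  have hL : (x + z) * (y + z) * (x + y + a * z) - h * x * y * z
      = ((x + z) * (y + z) * (c^2 * (x + y) + (c^2 + c - b) * z) + b * x * y * z) / c^2 := by
    rw [eq_div_iff hc2]
    have a1 : a * c^2 = c^2 + c - b := by rw [hA]; field_simp
    have h1 : h * c^2 = -b := by rw [hH]; field_simp
    linear_combination (x + z) * (y + z) * z * a1 - x * y * z * h1
  have x1 : (c + 1) * X = -(b * z) := by rw [hX]; field_simp; try ring
  have y1 : (c + 1) * Y = -(b * c * (y + z)) := by rw [hY]; field_simp; try ring
  have z1 : (c + 1) * Z = -(c * (x + y)) - (c + 1) * z := by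
    rw [hZ]; field_simp; try ring
  have expand : (Y^2 * Z + (1 - c) * X * Y * Z - b * Y * Z^2 - (X^3 - b * X^2 * Z)) * (c + 1)^3
      = ((c + 1) * Y)^2 * ((c + 1) * Z)
        + (1 - c) * ((c + 1) * X) * ((c + 1) * Y) * ((c + 1) * Z)
        - b * ((c + 1) * Y) * ((c + 1) * Z)^2
        - (((c + 1) * X)^3 - b * ((c + 1) * X)^2 * ((c + 1) * Z)) := by ring
  rw [x1, y1, z1] at expand
  have hT : Y^2 * Z + (1 - c) * X * Y * Z - b * Y * Z^2 - (X^3 - b * X^2 * Z)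
      = (b^2 * c * ((x + z) * (y + z) * (c^2 * (x + y) + (c^2 + c - b) * z) + b * x * y * z))
        / (c + 1)^3 := by
    rw [eq_div_iff hc13, expand]
    ring
  rw [hL, div_eq_zero_iff, or_iff_left hc2,
    ← sub_eq_zero (a := Y^2 * Z + (1 - c) * X * Y * Z - b * Y * Z^2) (b := X^3 - b * X^2 * Z),
    hT, div_eq_zero_iff, or_iff_left hc13]
  constructor
  · intro hp; rw [hp]; ring
  · intro hp
    rcases mul_eq_zero.mp hp with h' | h'
    · rcases mul_eq_zero.mp h' with h'' | h''
      · exact absurd h'' (pow_ne_zero 2 hb)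
      · exact absurd h'' hc
    · exact h'
end
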